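/- Let n ≥ 2 be an even integer and let Q_n = conv(C_{n-1} × {0} ∪ {e_n, -e_n}) ⊂ ℝ^n be the bipyramid over the (n-1)-dimensional cube. Then ℓ_1(Q_n) = 2(n-1). -/

import Mathlib

open MeasureTheory Polynomial Pointwise

/-- The number of integer lattice points contained in a subset of `ℝ^n`. -/
noncomputable def latticePointCount {n : ℕ} (S : Set (Fin n → ℝ)) : ℕ :=
  {v : Fin n → ℤ | (fun i => (v i : ℝ)) ∈ S}.ncard

/-- A lattice polytope in `ℝ^n`: the convex hull of finitely many integer points. -/
def IsLatticePolytope {n : ℕ} (P : Set (Fin n → ℝ)) : Prop :=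
  ∃ V : Finset (Fin n → ℤ),
    P = convexHull ℝ ((fun v : Fin n → ℤ => fun i => (v i : ℝ)) '' (V : Set (Fin n → ℤ)))

/-- `L` is the Ehrhart polynomial of `P`: for every positive integer `k` its value at `k`
is the number of lattice points of the dilate `kP`. -/
def IsEhrhartPoly {n : ℕ} (P : Set (Fin n → ℝ)) (L : Polynomial ℝ) : Prop :=
  ∀ k : ℕ, 0 < k → L.eval (k : ℝ) = latticePointCount ((k : ℝ) • P)

/-- The bipyramid `Q_n = conv(C_{n-1} × {0} ∪ {e_n, -e_n})` over the cube
`C_{n-1} = [-1,1]^{n-1}`, sitting in `ℝ^n` (here `n ≥ 2`). -/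
noncomputable def bipyramidQ (n : ℕ) (hn : 2 ≤ n) : Set (Fin n → ℝ) :=
  convexHull ℝ
    ({x : Fin n → ℝ | (∀ i, |x i| ≤ 1) ∧ x ⟨n - 1, by omega⟩ = 0} ∪
     {Pi.single (⟨n - 1, by omega⟩ : Fin n) (1 : ℝ),
      -Pi.single (⟨n - 1, by omega⟩ : Fin n) (1 : ℝ)})

/-!
In the coordinates `x = (y, t)` with `t = x_n`, the bipyramid `Q_n` is cut out by
`|y_i| + |t| ≤ 1`, so the slice of `k Q_n` at height `t` is a cube with `(2(k - |t|) + 1)^(n-1)`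
lattice points. Writing `E(x) = (2x + 1)^(n-1)`, this gives `L(k) = E(k) + 2 ∑_{j<k} E(j)`, hence
`G = L - E` satisfies `G(x + 1) - G(x) = 2 E(x)`. For `n` even, `E(-x-1) = -E(x)`, which makes
`G(x) - G(-x)` periodic, hence constant, hence zero: `G` is even. So `ℓ_1(Q_n)` is the linear
coefficient of `E`, namely `2(n-1)`.
-/

namespace Polynomial

theorem coeff_one_C_mul_X_add_one_pow {R : Type*} [CommRing R] (a : R) (m : ℕ) :
    ((C a * X + 1) ^ m).coeff 1 = m * a := by
  rw [← taylor_zero ((C a * X + 1) ^ m), taylor_coeff_one]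
  simp [derivative_pow]

variable {R : Type*} [CommRing R] [IsDomain R] [CharZero R]

theorem eq_of_eval_natCast_eq {p q : R[X]}
    (h : ∀ k : ℕ, 0 < k → p.eval (k : R) = q.eval (k : R)) : p = q := by
  refine eq_of_infinite_eval_eq p q <| Set.infinite_of_injective_forall_mem
    (f := fun k : ℕ => ((k + 1 : ℕ) : R)) (Nat.cast_injective.comp Nat.succ_injective) ?_
  exact fun k => h (k + 1) k.succ_pos

theorem eq_C_of_eval_add_one {p : R[X]} (h : ∀ x, p.eval (x + 1) = p.eval x) :
    p = C (p.eval 0) := by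
  have hnat (k : ℕ) : p.eval (k : R) = p.eval 0 := by
    induction k with
    | zero => simp
    | succ k ih => rw [Nat.cast_succ, h, ih]
  exact eq_of_eval_natCast_eq fun k _ => by rw [hnat, eval_C]

theorem comp_neg_X_eq_self_of_eval_add_one_sub {p : R[X]} {f : R → R}
    (hp : ∀ x, p.eval (x + 1) - p.eval x = f x) (hf : ∀ x, f (-x - 1) = -f x) :
    p.comp (-X) = p := by
  set q := p - p.comp (-X)
  have hq : ∀ x, q.eval (x + 1) = q.eval x := fun x => by
    have := hp (-x - 1)
    simp only [q, eval_sub, eval_comp, eval_neg, eval_X, hf, sub_add_cancel, neg_add'] at this ⊢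
    linear_combination hp x + this
  have := eq_C_of_eval_add_one hq
  simp only [q, eval_sub, eval_comp, eval_neg, eval_X, neg_zero, sub_self, map_zero] at this
  exact (sub_eq_zero.mp this).symm

theorem coeff_one_eq_zero_of_comp_neg_X_eq_self {p : R[X]} (hp : p.comp (-X) = p) :
    p.coeff 1 = 0 := by
  have h := congr_arg (fun q => q.derivative.eval 0) hp
  simp only [derivative_comp, derivative_neg, derivative_X, eval_neg, eval_comp, eval_X,
    neg_zero, neg_one_mul] at h
  rw [← taylor_zero p, taylor_coeff_one]
  exact CharZero.eq_neg_self_iff.mp h.symm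

end Polynomial

theorem Finset.sum_Icc_neg_self_sub_natAbs {M : Type*} [AddCommMonoid M] (k : ℕ) (g : ℕ → M) :
    ∑ t ∈ Finset.Icc (-k : ℤ) k, g (k - t.natAbs) = g k + 2 • ∑ j ∈ Finset.range k, g j := by
  induction k generalizing g with
  | zero => simp
  | succ k ih =>
    have hIcc : Finset.Icc (-(k + 1 : ℕ) : ℤ) (k + 1 : ℕ) =
        insert ((k : ℤ) + 1) (insert (-((k : ℤ) + 1)) (Finset.Icc (-k : ℤ) k)) := by
      ext t
      simp only [Finset.mem_Icc, Finset.mem_insert]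
      omega
    have hshift : ∑ t ∈ Finset.Icc (-k : ℤ) k, g (k + 1 - t.natAbs) =
        ∑ t ∈ Finset.Icc (-k : ℤ) k, g (k - t.natAbs + 1) :=
      Finset.sum_congr rfl fun t ht => by
        rw [Finset.mem_Icc] at ht
        congr 1
        omega
    rw [hIcc, Finset.sum_insert (by simp; omega), Finset.sum_insert (by simp), hshift,
      ih fun j => g (j + 1), Finset.sum_range_succ']
    have hapex : (k : ℤ) + 1 = (k + 1 : ℕ) := by push_cast; rfl
    rw [Int.natAbs_neg, hapex, Int.natAbs_natCast, Nat.sub_self, two_nsmul, two_nsmul]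
    abel

section CubeBipyramid

variable {ι : Type*}

def cubeBipyramid (l : ι) (r : ℝ) : Set (ι → ℝ) :=
  {x | ∀ i ≠ l, |x i| + |x l| ≤ r}

theorem smul_cubeBipyramid (l : ι) {r : ℝ} (hr : 0 < r) (s : ℝ) :
    r • cubeBipyramid l s = cubeBipyramid l (r * s) := by
  ext x
  simp only [Set.mem_smul_set_iff_inv_smul_mem₀ hr.ne', cubeBipyramid, Set.mem_ofPred_eq,
    Pi.smul_apply, smul_eq_mul, abs_mul, abs_inv, abs_of_pos hr, ← mul_add, inv_mul_le_iff₀ hr]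

theorem convex_cubeBipyramid (l : ι) (r : ℝ) : Convex ℝ (cubeBipyramid l r) := by
  intro x hx y hy a b ha hb hab i hi
  calc |a * x i + b * y i| + |a * x l + b * y l|
      ≤ a * (|x i| + |x l|) + b * (|y i| + |y l|) := by
        have := abs_add_le (a * x i) (b * y i)
        have := abs_add_le (a * x l) (b * y l)
        simp only [abs_mul, abs_of_nonneg ha, abs_of_nonneg hb] at *
        linarith
    _ ≤ a * r + b * r := by gcongr <;> [exact hx i hi; exact hy i hi]
    _ = r := by rw [← add_mul, hab, one_mul]

theorem convexHull_cube_union_apexes [DecidableEq ι] [Nontrivial ι] (l : ι) :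
    convexHull ℝ ({x : ι → ℝ | (∀ i, |x i| ≤ 1) ∧ x l = 0} ∪
      {Pi.single l 1, -Pi.single l 1}) = cubeBipyramid l 1 := by
  set S := {x : ι → ℝ | (∀ i, |x i| ≤ 1) ∧ x l = 0} ∪ {Pi.single l 1, -Pi.single l 1}
  apply subset_antisymm
  · refine convexHull_min ?_ (convex_cubeBipyramid l 1)
    rintro x (⟨hx, hxl⟩ | rfl | rfl) i hi
    · simpa [hxl] using hx i
    all_goals simp [hi]
  · intro x hx
    set t := x l
    obtain ⟨j, hj⟩ := exists_ne l
    have ht : |t| ≤ 1 := by linarith [hx j hj, abs_nonneg (x j)]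
    -- `x` is a convex combination of the base point `y` and the apexes `±e_l`; when `|t| = 1`
    -- the division gives the junk value `y = 0`, harmless since then `x = t e_l`.
    set y : ι → ℝ := fun i => if i = l then 0 else x i / (1 - |t|)
    have hy : y ∈ S := by
      refine Or.inl ⟨fun i => ?_, if_pos rfl⟩
      by_cases hi : i = l
      · simp [y, hi]
      · simp only [y, if_neg hi, abs_div, abs_of_nonneg (sub_nonneg.mpr ht)]
        exact div_le_one_of_le₀ (by linarith [hx i hi]) (sub_nonneg.mpr ht)
    have hdecomp : x = ∑ i, ![1 - |t|, (|t| + t) / 2, (|t| - t) / 2] i •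
        ![y, Pi.single l 1, -Pi.single l 1] i := by
      ext i
      simp only [Fin.sum_univ_three, Matrix.cons_val, Pi.add_apply, Pi.smul_apply, smul_eq_mul,
        Pi.neg_apply]
      by_cases hi : i = l
      · subst hi; simp [y]; ring
      · simp only [y, if_neg hi, Pi.single_eq_of_ne hi]
        rw [mul_div_cancel_of_imp' fun h => abs_nonpos_iff.mp (by linarith [hx i hi])]
        ring
    rw [hdecomp]
    refine (convex_convexHull ℝ S).sum_mem (fun i _ => ?_) ?_ (fun i _ => subset_convexHull ℝ S ?_)
    · fin_cases i <;> simp <;> linarith [neg_abs_le t, le_abs_self t]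
    · simp [Fin.sum_univ_three]; ring
    · fin_cases i
      · exact hy
      all_goals simp [S]

theorem Fintype.card_piFinset_ite_singleton {α : Type*} [Fintype ι] [DecidableEq ι] [DecidableEq α]
    (l : ι) (a : α) (s : Finset α) :
    (Fintype.piFinset fun i => if i = l then {a} else s).card = s.card ^ (Fintype.card ι - 1) := by
  simp [apply_ite Finset.card, Finset.prod_ite, Finset.filter_ne']

theorem ncard_int_mem_cubeBipyramid [Fintype ι] [DecidableEq ι] [Nontrivial ι] (l : ι) (k : ℕ) :
    {v : ι → ℤ | (fun i => (v i : ℝ)) ∈ cubeBipyramid l k}.ncard =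
      ∑ t ∈ Finset.Icc (-k : ℤ) k, (2 * (k - t.natAbs) + 1) ^ (Fintype.card ι - 1) := by
  set slice : ℤ → Finset (ι → ℤ) := fun t => Fintype.piFinset fun i =>
    if i = l then {t} else Finset.Icc (-(k - t.natAbs : ℕ) : ℤ) (k - t.natAbs : ℕ)
  have hslice {t : ℤ} (ht : t.natAbs ≤ k) (v : ι → ℤ) :
      v ∈ slice t ↔ v l = t ∧ ∀ i ≠ l, (v i).natAbs + t.natAbs ≤ k := by
    simp only [slice, Fintype.mem_piFinset]
    refine ⟨fun h => ⟨by simpa using h l, fun i hi => ?_⟩, fun ⟨hvl, h⟩ i => ?_⟩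
    · have := h i
      rw [if_neg hi, Finset.mem_Icc] at this
      omega
    · by_cases hi : i = l
      · simp [hi, hvl]
      · have := h i hi
        rw [if_neg hi, Finset.mem_Icc]
        omega
  have hcast (a b : ℤ) : |(a : ℝ)| + |(b : ℝ)| ≤ k ↔ a.natAbs + b.natAbs ≤ k := by
    rw [← Int.cast_abs, ← Int.cast_abs, ← Int.natCast_natAbs, ← Int.natCast_natAbs]
    norm_cast
  have hset : {v : ι → ℤ | (fun i => (v i : ℝ)) ∈ cubeBipyramid l k} =
      ↑((Finset.Icc (-k : ℤ) k).biUnion slice) := by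
    ext v
    obtain ⟨j, hj⟩ := exists_ne l
    simp only [cubeBipyramid, Set.mem_ofPred_eq, hcast, Finset.coe_biUnion, Finset.coe_Icc,
      Set.mem_iUnion, Finset.mem_coe, Set.mem_Icc, exists_prop]
    constructor
    · intro h
      have hvl : (v l).natAbs ≤ k := by have := h j hj; omega
      exact ⟨v l, by omega, (hslice hvl v).mpr ⟨rfl, h⟩⟩
    · rintro ⟨t, ht, hv⟩
      obtain ⟨rfl, h⟩ := (hslice (by omega) v).mp hv
      exact h
  rw [hset, Set.ncard_coe_finset, Finset.card_biUnion]
  · refine Finset.sum_congr rfl fun t _ => ?_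
    rw [Fintype.card_piFinset_ite_singleton, Int.card_Icc]
    congr 1
    omega
  · intro t _ t' _ hne
    refine Finset.disjoint_left.mpr fun v hv hv' => hne ?_
    have height {s : ℤ} (hv : v ∈ slice s) : v l = s := by
      simpa using Fintype.mem_piFinset.mp hv l
    rw [← height hv, height hv']

end CubeBipyramid

theorem latticePointCount_natCast_smul_bipyramidQ (n : ℕ) (hn : 2 ≤ n) {k : ℕ} (hk : 0 < k) :
    (latticePointCount ((k : ℝ) • bipyramidQ n hn) : ℝ) =
      (2 * k + 1) ^ (n - 1) + 2 * ∑ j ∈ Finset.range k, (2 * (j : ℝ) + 1) ^ (n - 1) := by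
  have : Nontrivial (Fin n) := Fin.nontrivial_iff_two_le.mpr hn
  rw [bipyramidQ, convexHull_cube_union_apexes, smul_cubeBipyramid _ (by positivity), mul_one,
    latticePointCount, ncard_int_mem_cubeBipyramid,
    Finset.sum_Icc_neg_self_sub_natAbs k fun j => (2 * j + 1) ^ (Fintype.card (Fin n) - 1)]
  simp only [Fintype.card_fin, smul_eq_mul]
  push_cast
  rfl

theorem bipyramid_linear_ehrhart_coeff_of_even (n : ℕ) (hn : 2 ≤ n) (heven : Even n)
    (L : Polynomial ℝ) (hL : IsEhrhartPoly (bipyramidQ n hn) L) :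
    L.coeff 1 = 2 * ((n : ℝ) - 1) := by
  have hodd : Odd (n - 1) := Nat.Even.sub_odd (by omega) heven odd_one
  set E : ℝ[X] := (C 2 * X + 1) ^ (n - 1)
  have hcount (k : ℕ) (hk : 0 < k) :
      L.eval (k : ℝ) = E.eval (k : ℝ) + 2 * ∑ j ∈ Finset.range k, E.eval (j : ℝ) := by
    simpa [E, hL k hk] using latticePointCount_natCast_smul_bipyramidQ n hn hk
  have hstep : (L - E).comp (X + 1) - (L - E) = C 2 * E :=
    eq_of_eval_natCast_eq fun k hk => by
      have := hcount (k + 1) k.succ_pos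
      push_cast at this
      simp only [eval_sub, eval_comp, eval_add, eval_X, eval_one, eval_mul, eval_C, this,
        hcount k hk, Finset.sum_range_succ]
      ring
  have heven : (L - E).comp (-X) = L - E :=
    comp_neg_X_eq_self_of_eval_add_one_sub (f := fun x => 2 * E.eval x)
      (fun x => by simpa using congr_arg (eval x) hstep)
      (fun x => by
        simp only [E, eval_pow, eval_add, eval_mul, eval_C, eval_X, eval_one]
        rw [show 2 * (-x - 1) + 1 = -(2 * x + 1) by ring, hodd.neg_pow, mul_neg])
  have hlin := coeff_one_eq_zero_of_comp_neg_X_eq_self heven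
  rw [coeff_sub, sub_eq_zero, coeff_one_C_mul_X_add_one_pow] at hlin
  rw [hlin, Nat.cast_sub (by omega)]
  ring
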